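/- The stable set W^s = {(x,v) : x+v = ∫₀^∞ e^{−s}F(s,X(s,x,v))ds} (for X′ = V, V′ = X − F(t,X), F continuous with |F(t,y)| ≤ A e^{−t}) is invariant under the flow: if (x,v) ∈ W^s then (X(t,x,v),V(t,x,v)) ∈ W^s for all t ≥ 0, where W^s-membership of a point (x̃,ṽ) means x̃+ṽ = ∫₀^∞ e^{−s}F(t+s, X(t+s,x,v))ds with the time-shifted field. -/

import Mathlib

open MeasureTheory

/-- The Euclidean norm on `Fin n → ℝ`. -/
noncomputable def euclNorm {n : ℕ} (x : Fin n → ℝ) : ℝ := Real.sqrt (∑ i, x i ^ 2)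

/-!
Along a solution, `u(t) = e^{-t}(X(t) + V(t))` satisfies `u' = -e^{-t} F(t, X(t))`, because the
linear part of `(X + V)' = X + V - F` is cancelled by the weight `e^{-t}`. The right-hand side is
integrable on `(0, ∞)` thanks to the decay of `F`, so the fundamental theorem of calculus and the
hypothesis `u(0) = ∫₀^∞ e^{-s} F(s, X(s)) ds` give `u(t) = ∫ₜ^∞ e^{-s} F(s, X(s)) ds`. Substituting
`s ↦ t + s` and cancelling `e^{-t}` yields the claim.
-/

open Real Set

lemma norm_le_euclNorm {n : ℕ} (y : Fin n → ℝ) : ‖y‖ ≤ euclNorm y := by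
  refine (pi_norm_le_iff_of_nonneg (Real.sqrt_nonneg _)).2 fun i => ?_
  rw [Real.norm_eq_abs, ← Real.sqrt_sq_eq_abs]
  exact Real.sqrt_le_sqrt <|
    Finset.single_le_sum (f := fun j => y j ^ 2) (fun j _ => sq_nonneg _) (Finset.mem_univ i)

section

variable {E : Type*} [NormedAddCommGroup E]

lemma integrableOn_Ioi_of_norm_le_mul_exp_neg {f : ℝ → E} {a C : ℝ}
    (hf : ContinuousOn f (Ici a)) (hbound : ∀ s, a ≤ s → ‖f s‖ ≤ C * exp (-s)) :
    IntegrableOn f (Ioi a) := by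
  refine Integrable.mono' ((exp_neg_integrableOn_Ioi a one_pos).const_mul C)
    ((hf.mono Ioi_subset_Ici_self).aestronglyMeasurable measurableSet_Ioi) ?_
  filter_upwards [ae_restrict_mem measurableSet_Ioi] with s hs
  simpa using hbound s hs.le

variable [NormedSpace ℝ E]

lemma hasDerivAt_exp_neg_smul_add {X V : ℝ → E} {g : E} {t : ℝ}
    (hX : HasDerivAt X (V t) t) (hV : HasDerivAt V (X t - g) t) :
    HasDerivAt (fun s => exp (-s) • (X s + V s)) (-(exp (-t) • g)) t := by
  have hexp : HasDerivAt (fun s => exp (-s)) (-exp (-t)) t := by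
    simpa using (hasDerivAt_neg t).exp
  refine (hexp.smul (hX.add hV)).congr_deriv ?_
  rw [Pi.add_apply]
  module

lemma setIntegral_Ioi_eq_setIntegral_Ioi_zero_comp_add (f : ℝ → E) (t : ℝ) :
    ∫ s in Ioi t, f s = ∫ s in Ioi 0, f (t + s) := by
  rw [← (measurePreserving_add_left volume t).setIntegral_preimage_emb
    (measurableEmbedding_addLeft t) f (Ioi t), preimage_const_add_Ioi, sub_self]

variable [CompleteSpace E]

lemma eq_setIntegral_Ioi_of_hasDerivAt {u f : ℝ → E} {a t : ℝ}
    (hu : ∀ s, a ≤ s → HasDerivAt u (-f s) s) (hf : IntegrableOn f (Ioi a))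
    (ha : u a = ∫ s in Ioi a, f s) (ht : a ≤ t) :
    u t = ∫ s in Ioi t, f s := by
  have hftc : u t - u a = -∫ s in a..t, f s := by
    rw [← intervalIntegral.integral_neg]
    refine (intervalIntegral.integral_eq_sub_of_hasDerivAt (fun s hs => hu s ?_) ?_).symm
    · exact (uIcc_of_le ht ▸ hs).1
    · exact ((intervalIntegrable_iff_integrableOn_Ioc_of_le ht).2
        (hf.mono_set Ioc_subset_Ioi_self)).neg
  rw [← intervalIntegral.integral_Ioi_sub_Ioi hf ht, ha] at hftc
  rw [← sub_eq_zero, ← sub_eq_zero.2 hftc]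
  abel

end

theorem stmt17_general {n : ℕ} (F : ℝ → (Fin n → ℝ) → (Fin n → ℝ))
    (hF : Continuous (fun p : ℝ × (Fin n → ℝ) => F p.1 p.2))
    (A : ℝ)
    (hFbound : ∀ t : ℝ, 0 ≤ t → ∀ y : Fin n → ℝ, euclNorm (F t y) ≤ A * Real.exp (-t))
    (X V : ℝ → Fin n → ℝ) (x v : Fin n → ℝ)
    (hX0 : X 0 = x) (hV0 : V 0 = v)
    (hX : ∀ t : ℝ, 0 ≤ t → HasDerivAt X (V t) t)
    (hV : ∀ t : ℝ, 0 ≤ t → HasDerivAt V (X t - F t (X t)) t)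
    (hxv : x + v = ∫ s in Set.Ioi (0:ℝ), Real.exp (-s) • F s (X s)) :
    ∀ t : ℝ, 0 ≤ t →
      X t + V t = ∫ s in Set.Ioi (0:ℝ), Real.exp (-s) • F (t + s) (X (t + s)) := by
  intro t ht
  set f : ℝ → Fin n → ℝ := fun s => exp (-s) • F s (X s)
  have hf_cont : ContinuousOn f (Ici 0) :=
    (continuous_exp.comp continuous_neg).continuousOn.smul <| hF.comp_continuousOn <|
      continuousOn_id.prodMk fun s hs => (hX s hs).continuousAt.continuousWithinAt
  have hf_int : IntegrableOn f (Ioi 0) := by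
    refine integrableOn_Ioi_of_norm_le_mul_exp_neg (C := A) hf_cont fun s hs => ?_
    have hF_le : ‖F s (X s)‖ ≤ A * exp (-s) := (norm_le_euclNorm _).trans (hFbound s hs (X s))
    calc ‖f s‖ = exp (-s) * ‖F s (X s)‖ := by simp [f, norm_smul]
      _ ≤ ‖F s (X s)‖ := mul_le_of_le_one_left (norm_nonneg _) (exp_le_one_iff.2 (by linarith))
      _ ≤ A * exp (-s) := hF_le
  have hu : exp (-t) • (X t + V t) = ∫ s in Ioi t, f s :=
    eq_setIntegral_Ioi_of_hasDerivAt (u := fun s => exp (-s) • (X s + V s))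
      (fun s hs => hasDerivAt_exp_neg_smul_add (hX s hs) (hV s hs)) hf_int
      (by simpa [hX0, hV0] using hxv) ht
  rw [setIntegral_Ioi_eq_setIntegral_Ioi_zero_comp_add] at hu
  refine smul_right_injective _ (exp_ne_zero (-t)) (hu.trans ?_)
  change _ = exp (-t) • _
  rw [← integral_smul]
  refine setIntegral_congr_fun measurableSet_Ioi fun s _ => ?_
  simp only [f, smul_smul, ← exp_add, neg_add]

/-- invariance of the stable set: if
`x + v = ∫₀^∞ e^{−s} F(s,X(s)) ds`, then for all `t ≥ 0`
`X(t) + V(t) = ∫₀^∞ e^{−s} F(t+s, X(t+s)) ds`. -/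
theorem stmt17 {n : ℕ} (F : ℝ → (Fin n → ℝ) → (Fin n → ℝ))
    (hF : Continuous (fun p : ℝ × (Fin n → ℝ) => F p.1 p.2))
    (A : ℝ) (hA : 0 < A)
    (hFbound : ∀ t : ℝ, 0 ≤ t → ∀ y : Fin n → ℝ, euclNorm (F t y) ≤ A * Real.exp (-t))
    (X V : ℝ → Fin n → ℝ) (x v : Fin n → ℝ)
    (hX0 : X 0 = x) (hV0 : V 0 = v)
    (hX : ∀ t : ℝ, 0 ≤ t → HasDerivAt X (V t) t)
    (hV : ∀ t : ℝ, 0 ≤ t → HasDerivAt V (X t - F t (X t)) t)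
    (hxv : x + v = ∫ s in Set.Ioi (0:ℝ), Real.exp (-s) • F s (X s)) :
    ∀ t : ℝ, 0 ≤ t →
      X t + V t = ∫ s in Set.Ioi (0:ℝ), Real.exp (-s) • F (t + s) (X (t + s)) :=
  stmt17_general F hF A hFbound X V x v hX0 hV0 hX hV hxv
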